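/- arXiv:2111.02572 — 6 statements merged into one kernel-verified Lean document; each statement's English description precedes it below -/
import Mathlib

section
/- Let G = (V,E) be a quasi-bipartite directed graph with root r and terminal set X ⊆ V \ {r}, let F ⊆ E, and let A be a minimal violated set with respect to F (i.e., A ⊆ V \ {r}, A ∩ X ≠ ∅, no edge of F enters A, and no proper subset of A has these properties). Then for any two terminals t, t' ∈ A, there is a directed path from t to t' using only edges of F. -/
variable {V : Type*} [Fintype V] [DecidableEq V]

/-- `a` reaches `b` via a directed path using only edges in `F`. -/
def reaches (F : Finset (V × V)) (a b : V) : Prop :=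
  Relation.ReflTransGen (fun x y => (x, y) ∈ F) a b

/-- `S` is violated with respect to `F`: `r ∉ S`, `S` contains a terminal,
and no edge of `F` enters `S`. -/
def Violated (r : V) (X : Finset V) (F : Finset (V × V)) (S : Finset V) : Prop :=
  r ∉ S ∧ (S ∩ X).Nonempty ∧ ∀ e ∈ F, ¬(e.1 ∉ S ∧ e.2 ∈ S)

/-- A minimal violated set (active moat): violated, and no proper subset is violated. -/
def MinViolated (r : V) (X : Finset V) (F : Finset (V × V)) (S : Finset V) : Prop :=
  Violated r X F S ∧ ∀ S' ⊂ S, ¬ Violated r X F S'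

/-- In a quasi-bipartite instance, any two terminals of a minimal violated set `A`
are joined by a directed path using only edges of `F`. -/
theorem terminals_of_active_moat_strongly_connected
    (E F : Finset (V × V)) (r : V) (X : Finset V)
    (hQB : ∀ e ∈ E, e.1 ∈ insert r X ∨ e.2 ∈ insert r X)
    (hF : F ⊆ E) (A : Finset V) (hA : MinViolated r X F A)
    (t t' : V) (htA : t ∈ A) (htX : t ∈ X) (ht'A : t' ∈ A) (ht'X : t' ∈ X) :
    reaches F t t' := by
  classical
  obtain ⟨⟨hr, hXne, hedge⟩, hmin⟩ := hA
  set R := A.filter (fun v => reaches F v t') with hR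
  have hRA : R ⊆ A := Finset.filter_subset _ _
  have ht'R : t' ∈ R := Finset.mem_filter.2 ⟨ht'A, Relation.ReflTransGen.refl⟩
  have hviol : Violated r X F R := by
    refine ⟨fun h => hr (hRA h), ⟨t', Finset.mem_inter.2 ⟨ht'R, ht'X⟩⟩, ?_⟩
    rintro ⟨u, v⟩ he ⟨hu, hv⟩
    have hvA := Finset.mem_filter.1 hv
    have huA : u ∈ A := by
      by_contra huA
      exact hedge _ he ⟨huA, hRA hv⟩
    exact hu (Finset.mem_filter.2 ⟨huA, Relation.ReflTransGen.head he hvA.2⟩)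
  have hRAeq : R = A := by
    by_contra hne
    exact hmin R (Finset.ssubset_iff_subset_ne.2 ⟨hRA, hne⟩) hviol
  have htR : t ∈ R := hRAeq ▸ htA
  exact (Finset.mem_filter.1 htR).2
end

section
/- Let G = (V,E) be a quasi-bipartite directed graph with root r and terminals X, let F ⊆ E, and let A be a minimal violated set with respect to F with C_A the unique strongly connected component of (V,F) contained in A that contains the terminals of A. Then every vertex of A \ C_A is a Steiner node, and for every Steiner node s ∈ A \ C_A there exists an edge of F from s to a vertex of C_A. -/
variable {V : Type*} [Fintype V] [DecidableEq V]

/-- `C` is a strongly connected component of the digraph `(V, F)`. -/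
def IsSCC (F : Finset (V × V)) (C : Finset V) : Prop :=
  C.Nonempty ∧ (∀ u ∈ C, ∀ v ∈ C, reaches F u v) ∧
  (∀ u ∈ C, ∀ v : V, reaches F u v → reaches F v u → v ∈ C)

/-- For a minimal violated set `A` with SCC part `C_A` (the strongly connected component
of `(V,F)` inside `A` containing the terminals of `A`): every vertex of `A \ C_A` is a
Steiner node, and every such Steiner node has an edge of `F` into `C_A`. -/
theorem active_moat_structure
    (E F : Finset (V × V)) (r : V) (X : Finset V)
    (hQB : ∀ e ∈ E, e.1 ∈ insert r X ∨ e.2 ∈ insert r X)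
    (hF : F ⊆ E) (A CA : Finset V)
    (hA : MinViolated r X F A)
    (hSCC : IsSCC F CA) (hsub : CA ⊆ A) (hterm : A ∩ X ⊆ CA) :
    (∀ v ∈ A \ CA, v ∉ X ∧ v ≠ r) ∧
    (∀ s ∈ A \ CA, ∃ e ∈ F, e.1 = s ∧ e.2 ∈ CA) := by
  classical
  obtain ⟨⟨hrA, hAX, hnoedge⟩, hmin⟩ := hA
  -- any vertex reaching into A is itself in A (no edge of F enters A)
  have L1 : ∀ u c : V, reaches F u c → c ∈ A → u ∈ A := by
    intro u c h hc
    induction h using Relation.ReflTransGen.head_induction_on with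
    | refl => exact hc
    | head hedge _ ih =>
      by_contra hu
      exact hnoedge _ hedge ⟨hu, ih⟩
  have part1 : ∀ v ∈ A \ CA, v ∉ X ∧ v ≠ r := by
    intro v hv
    rw [Finset.mem_sdiff] at hv
    refine ⟨fun hvX => hv.2 (hterm (Finset.mem_inter.mpr ⟨hv.1, hvX⟩)), ?_⟩
    rintro rfl; exact hrA hv.1
  -- the set of vertices of A that reach CA is violated, hence equals A
  set S' : Finset V := A.filter (fun v => ∃ c ∈ CA, reaches F v c) with hS'
  have hS'A : S' ⊆ A := Finset.filter_subset _ _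
  have hCAS' : CA ⊆ S' := fun c hc =>
    Finset.mem_filter.mpr ⟨hsub hc, c, hc, Relation.ReflTransGen.refl⟩
  have hviol : Violated r X F S' := by
    refine ⟨fun h => hrA (hS'A h), ?_, ?_⟩
    · obtain ⟨t, ht⟩ := hAX
      rw [Finset.mem_inter] at ht
      exact ⟨t, Finset.mem_inter.mpr
        ⟨hCAS' (hterm (Finset.mem_inter.mpr ht)), ht.2⟩⟩
    · rintro e he ⟨h1, h2⟩
      obtain ⟨h2A, c, hc, hreach⟩ := Finset.mem_filter.mp h2
      by_cases h1A : e.1 ∈ A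
      · exact h1 (Finset.mem_filter.mpr
          ⟨h1A, c, hc, Relation.ReflTransGen.head he hreach⟩)
      · exact hnoedge e he ⟨h1A, hS'A h2⟩
  have hS'eq : S' = A := by
    by_contra hne
    exact hmin S' (Finset.ssubset_iff_subset_ne.mpr ⟨hS'A, hne⟩) hviol
  have reach_all : ∀ v ∈ A, ∃ c ∈ CA, reaches F v c := by
    intro v hv
    rw [← hS'eq] at hv
    exact (Finset.mem_filter.mp hv).2
  refine ⟨part1, ?_⟩
  intro s hs
  have hs' := Finset.mem_sdiff.mp hs
  obtain ⟨c, hc, hreach⟩ := reach_all s hs'.1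
  rcases Relation.ReflTransGen.cases_head hreach with heq | ⟨w, hsw, hwc⟩
  · exact absurd (heq ▸ hc) hs'.2
  · have hwA : w ∈ A := L1 w c hwc (hsub hc)
    have hsX := part1 s hs
    rcases hQB (s, w) (hF hsw) with h | h
    · rcases Finset.mem_insert.mp h with h | h
      · exact absurd h hsX.2
      · exact absurd h hsX.1
    · rcases Finset.mem_insert.mp h with h | h
      · exact absurd (h ▸ hwA) hrA
      · exact ⟨(s, w), hsw, rfl, hterm (Finset.mem_inter.mpr ⟨hwA, h⟩)⟩
end

section
/- Let G = (V,E) be a quasi-bipartite directed graph with root r and terminals X, let F ⊆ E, and let A, A' be two distinct minimal violated sets with respect to F. Then A ∩ A' contains no terminals; i.e., any vertex common to two active moats is a Steiner node outside both C_A and C_{A'}. -/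
variable {V : Type*} [Fintype V] [DecidableEq V]

private lemma reach_into {F : Finset (V × V)} {S : Finset V}
    (hS : ∀ e ∈ F, ¬(e.1 ∉ S ∧ e.2 ∈ S)) :
    ∀ {a b : V}, reaches F a b → b ∈ S → a ∈ S := by
  intro a b h hb
  induction h using Relation.ReflTransGen.head_induction_on with
  | refl => exact hb
  | head hac _ ih =>
    rename_i x c _
    by_contra hx
    exact hS (x, c) hac ⟨hx, ih⟩

/-- Two distinct active moats share no terminals: any vertex common to two minimal
violated sets is a Steiner node lying outside both SCC parts `C_A` and `C_{A'}`. -/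
theorem moats_intersect_only_in_steiner
    (E F : Finset (V × V)) (r : V) (X : Finset V)
    (hQB : ∀ e ∈ E, e.1 ∈ insert r X ∨ e.2 ∈ insert r X)
    (hF : F ⊆ E) (A A' CA CA' : Finset V)
    (hA : MinViolated r X F A) (hA' : MinViolated r X F A') (hne : A ≠ A')
    (hSCC : IsSCC F CA) (hsub : CA ⊆ A) (hterm : A ∩ X ⊆ CA)
    (hSCC' : IsSCC F CA') (hsub' : CA' ⊆ A') (hterm' : A' ∩ X ⊆ CA') :
    ∀ v ∈ A ∩ A', v ∉ X ∧ v ∉ CA ∧ v ∉ CA' := by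
  have hX : ∀ w ∈ A ∩ A', w ∉ X := by
    intro w hw hwX
    have hviol : Violated r X F (A ∩ A') := by
      refine ⟨fun hr => hA.1.1 (Finset.mem_inter.1 hr).1,
        ⟨w, Finset.mem_inter.2 ⟨hw, hwX⟩⟩, ?_⟩
      intro e he hcon
      rcases hcon with ⟨h1, h2⟩
      rw [Finset.mem_inter] at h2
      rw [Finset.mem_inter, not_and_or] at h1
      rcases h1 with h | h
      · exact hA.1.2.2 e he ⟨h, h2.1⟩
      · exact hA'.1.2.2 e he ⟨h, h2.2⟩
    by_cases hEq : A ∩ A' = A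
    · have hAA' : A ⊆ A' := fun x hx => (Finset.mem_inter.1 (hEq ▸ hx)).2
      exact hA'.2 A (ssubset_of_subset_of_ne hAA' hne) hA.1
    · exact hA.2 (A ∩ A') (ssubset_of_subset_of_ne Finset.inter_subset_left hEq) hviol
  intro v hv
  have hvA : v ∈ A := (Finset.mem_inter.1 hv).1
  have hvA' : v ∈ A' := (Finset.mem_inter.1 hv).2
  refine ⟨hX v hv, ?_, ?_⟩
  · intro hvC
    obtain ⟨t, ht⟩ := hA.1.2.1
    have htC : t ∈ CA := hterm ht
    have hre : reaches F t v := hSCC.2.1 t htC v hvC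
    have htA' : t ∈ A' := reach_into hA'.1.2.2 hre hvA'
    exact hX t (Finset.mem_inter.2 ⟨(Finset.mem_inter.1 ht).1, htA'⟩)
      (Finset.mem_inter.1 ht).2
  · intro hvC
    obtain ⟨t, ht⟩ := hA'.1.2.1
    have htC : t ∈ CA' := hterm' ht
    have hre : reaches F t v := hSCC'.2.1 t htC v hvC
    have htA : t ∈ A := reach_into hA.1.2.2 hre hvA
    exact hX t (Finset.mem_inter.2 ⟨htA, (Finset.mem_inter.1 ht).1⟩)
      (Finset.mem_inter.1 ht).2
end

section
/- Let T̄ be an arborescence rooted at r with integer vertex labels L(v) = Elevel_{T̄}(v) that are nondecreasing along tree paths, and let ℒ be a set of non-tree edges such that: (i) for each (a,b) ∈ ℒ, L(b) ≥ L(a) - 1, and (ii) whenever (a,b) ∈ ℒ, every 'active' descendant c of b in T̄ satisfies L(c) ≥ L(b) + 2, and tails of ℒ-edges are active, heads are inactive. Then for any alternating dipath P = v_1, ℒ, v_2, T̄, v_3, ℒ, ..., T̄, v_k with k ≥ 3 odd, where v_i is active for odd i and inactive for even i, we have L(v_k) ≥ L(v_1) + (k-1)/2. -/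
variable {V : Type*} [Fintype V] [DecidableEq V]

/-- An arborescence rooted at `r`. -/
def IsArborescence (r : V) (T : Finset (V × V)) : Prop :=
  (∀ v : V, v ≠ r → (T.filter (fun e => e.2 = v)).card = 1) ∧
  (∀ e ∈ T, e.2 ≠ r) ∧
  (∀ v : V, reaches T r v)

/-- Alternating-path label lemma. Labels `L` are nondecreasing along tree paths of `T̄`;
every `ℒ`-edge `(a,b)` goes from an active vertex to an inactive vertex with
`L a ≤ L b + 1`; and every active tree-descendant `c` of the head `b` of an `ℒ`-edge
satisfies `L c ≥ L b + 2`. Then for any alternating dipath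
`v 1, ℒ, v 2, T̄, v 3, ℒ, …, T̄, v (2m+1)` (with `v i` active for odd `i` and inactive
for even `i`, `m ≥ 1`), we have `L (v (2m+1)) ≥ L (v 1) + m`. -/
theorem alternating_path_label_growth
    (r : V) (Tbar Laux : Finset (V × V)) (hT : IsArborescence r Tbar)
    (Active Inactive : Finset V) (hdisj : Disjoint Active Inactive)
    (L : V → ℕ)
    (hmono : ∀ u v : V, reaches Tbar u v → L u ≤ L v)
    (hLedge : ∀ e ∈ Laux, e.1 ∈ Active ∧ e.2 ∈ Inactive ∧ L e.1 ≤ L e.2 + 1)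
    (hdesc : ∀ e ∈ Laux, ∀ c : V, c ∈ Active → reaches Tbar e.2 c → L e.2 + 2 ≤ L c)
    (m : ℕ) (hm : 1 ≤ m) (v : ℕ → V)
    (hlabels : ∀ i : ℕ, 1 ≤ i → i ≤ 2 * m + 1 →
      (Odd i → v i ∈ Active) ∧ (Even i → v i ∈ Inactive))
    (hsteps : ∀ i : ℕ, 1 ≤ i → i < 2 * m + 1 →
      (Odd i → (v i, v (i + 1)) ∈ Laux) ∧ (Even i → reaches Tbar (v i) (v (i + 1)))) :
    L (v 1) + m ≤ L (v (2 * m + 1)) := by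
  -- key single-step lemma
  have step : ∀ j : ℕ, 1 ≤ j → j ≤ m →
      L (v (2 * (j - 1) + 1)) + 1 ≤ L (v (2 * j + 1)) := by
    intro j hj1 hjm
    obtain ⟨j, rfl⟩ := Nat.exists_eq_add_of_le hj1
    have h2 : 2 * (1 + j - 1) + 1 = 2 * j + 1 := by omega
    rw [h2]
    set a := 2 * j + 1 with ha
    have hodd : Odd a := ⟨j, by omega⟩
    have heven : Even (a + 1) := ⟨j + 1, by omega⟩
    have h1 : 1 ≤ a := by omega
    have h2' : a < 2 * m + 1 := by omega
    have h3 : a + 1 < 2 * m + 1 := by omega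
    have hL : (v a, v (a + 1)) ∈ Laux := (hsteps a h1 h2').1 hodd
    have hR : reaches Tbar (v (a + 1)) (v (a + 2)) := by
      have := (hsteps (a + 1) (by omega) h3).2 heven
      simpa [show a + 1 + 1 = a + 2 by omega] using this
    have hact : v (a + 2) ∈ Active := by
      have := (hlabels (a + 2) (by omega) (by omega)).1 ⟨j + 1, by omega⟩
      exact this
    have h4 := hdesc _ hL (v (a + 2)) hact hR
    have h5 := (hLedge _ hL).2.2
    simp only at h4 h5
    have : 2 * (1 + j) + 1 = a + 2 := by omega
    rw [this]
    omega
  -- induction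
  have main : ∀ j : ℕ, j ≤ m → L (v 1) + j ≤ L (v (2 * j + 1)) := by
    intro j
    induction j with
    | zero => simp
    | succ n ih =>
      intro hn
      have h1 := ih (by omega)
      have h2 := step (n + 1) (by omega) hn
      have : n + 1 - 1 = n := by omega
      rw [this] at h2
      omega
  exact main m le_rfl
end

section
/- Under the hypotheses of the alternating-path label lemma (tree labels nondecreasing, ℒ-edges (a,b) with L(b) ≥ L(a) - 1 and active tail/inactive head, and every active tree-descendant c of the head b of an ℒ-edge satisfying L(c) ≥ L(b) + 2), the directed graph T̄ ∪ ℒ is acyclic. -/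
variable {V : Type*} [Fintype V] [DecidableEq V]

/-- A directed graph is acyclic if it has no directed cycle. -/
def Acyclic (F : Finset (V × V)) : Prop :=
  ∀ v : V, ¬ Relation.TransGen (fun x y => (x, y) ∈ F) v v

/-- Paths of a given length. -/
def reachN (F : Finset (V × V)) : ℕ → V → V → Prop
  | 0, a, b => a = b
  | n+1, a, b => ∃ c, reachN F n a c ∧ (c, b) ∈ F

lemma reaches_exists_reachN {F : Finset (V × V)} {a b : V} (h : reaches F a b) :
    ∃ n, reachN F n a b := by
  induction h with
  | refl => exact ⟨0, rfl⟩
  | tail _ hedge ih =>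
    obtain ⟨n, hn⟩ := ih
    exact ⟨n + 1, _, hn, hedge⟩

lemma tree_acyclic (r : V) (T : Finset (V × V)) (hT : IsArborescence r T) :
    Acyclic T := by
  classical
  have hex : ∀ w : V, ∃ n, reachN T n r w := fun w => reaches_exists_reachN (hT.2.2 w)
  set d : V → ℕ := fun w => Nat.find (hex w) with hd
  have hedge : ∀ u w : V, (u, w) ∈ T → d u < d w := by
    intro u w huw
    have hw : reachN T (d w) r w := Nat.find_spec (hex w)
    have hwr : w ≠ r := hT.2.1 (u, w) huw
    cases hn : d w with
    | zero =>
      rw [hn] at hw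
      exact absurd hw.symm hwr
    | succ m =>
      rw [hn] at hw
      obtain ⟨c, hc, hcw⟩ := hw
      have hcu : c = u := by
        obtain ⟨e, he⟩ := Finset.card_eq_one.mp (hT.1 w hwr)
        have h1 : (c, w) ∈ T.filter (fun e => e.2 = w) := by
          simp [Finset.mem_filter, hcw]
        have h2 : (u, w) ∈ T.filter (fun e => e.2 = w) := by
          simp [Finset.mem_filter, huw]
        rw [he, Finset.mem_singleton] at h1 h2
        have := h1.trans h2.symm
        exact (Prod.mk.injEq _ _ _ _ ▸ this).1
      subst hcu
      have : d c ≤ m := Nat.find_min' (hex c) hc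
      omega
  intro v hv
  have : ∀ x y : V, Relation.TransGen (fun a b => (a, b) ∈ T) x y → d x < d y := by
    intro x y h
    induction h with
    | single h => exact hedge _ _ h
    | tail _ h ih => exact lt_trans ih (hedge _ _ h)
  exact absurd (this v v hv) (lt_irrefl _)

/-- Under the hypotheses of the alternating-path label lemma (tree labels nondecreasing,
`ℒ`-edges `(a,b)` with `L a ≤ L b + 1` going from active to inactive vertices,
and every active tree-descendant `c` of the head `b` of an `ℒ`-edge satisfying
`L c ≥ L b + 2`), the directed graph `T̄ ∪ ℒ` is acyclic. -/
theorem tree_union_L_acyclic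
    (r : V) (Tbar Laux : Finset (V × V)) (hT : IsArborescence r Tbar)
    (Active Inactive : Finset V) (hdisj : Disjoint Active Inactive)
    (hnontree : ∀ e ∈ Laux, e ∉ Tbar)
    (L : V → ℕ)
    (hmono : ∀ u v : V, reaches Tbar u v → L u ≤ L v)
    (hLedge : ∀ e ∈ Laux, e.1 ∈ Active ∧ e.2 ∈ Inactive ∧ L e.1 ≤ L e.2 + 1)
    (hdesc : ∀ e ∈ Laux, ∀ c : V, c ∈ Active → reaches Tbar e.2 c → L e.2 + 2 ≤ L c) :
    Acyclic (Tbar ∪ Laux) := by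
  classical
  set U := Tbar ∪ Laux with hU
  -- lift tree reachability to union reachability
  have hlift : ∀ {x y : V}, reaches Tbar x y →
      Relation.ReflTransGen (fun a b => (a, b) ∈ U) x y := by
    intro x y h
    exact Relation.ReflTransGen.mono (fun a b hab => Finset.mem_union_left _ hab) _ _ h
  -- key invariant lemma
  have key : ∀ b v : V, (∀ c : V, c ∈ Active → reaches Tbar b c → L b + 2 ≤ L c) →
      Relation.ReflTransGen (fun x y => (x, y) ∈ U) b v →
      ∃ b', (∀ c : V, c ∈ Active → reaches Tbar b' c → L b' + 2 ≤ L c) ∧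
        L b ≤ L b' ∧ reaches Tbar b' v := by
    intro b v hQ h
    induction h with
    | refl => exact ⟨b, hQ, le_refl _, Relation.ReflTransGen.refl⟩
    | @tail x y hxy hedge ih =>
      obtain ⟨b', hQ', hle, hreach⟩ := ih
      rcases Finset.mem_union.mp hedge with hT' | hL'
      · exact ⟨b', hQ', hle, hreach.tail hT'⟩
      · obtain ⟨hact, _, hlab⟩ := hLedge (x, y) hL'
        have h1 : L b' + 2 ≤ L x := hQ' x hact hreach
        refine ⟨y, fun c hc hr => hdesc (x, y) hL' c hc hr, ?_, Relation.ReflTransGen.refl⟩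
        simp only at hlab
        omega
  -- decomposition lemma
  have decomp : ∀ x y : V, Relation.ReflTransGen (fun a b => (a, b) ∈ U) x y →
      reaches Tbar x y ∨ ∃ a b : V, (a, b) ∈ Laux ∧
        Relation.ReflTransGen (fun p q => (p, q) ∈ U) x a ∧
        Relation.ReflTransGen (fun p q => (p, q) ∈ U) b y := by
    intro x y h
    induction h with
    | refl => exact Or.inl Relation.ReflTransGen.refl
    | @tail z w hxz hedge ih =>
      rcases Finset.mem_union.mp hedge with hT' | hL'
      · rcases ih with htree | ⟨a, b, hab, hxa, hbz⟩
        · exact Or.inl (htree.tail hT')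
        · exact Or.inr ⟨a, b, hab, hxa, hbz.tail hedge⟩
      · rcases ih with htree | ⟨a, b, hab, hxa, hbz⟩
        · exact Or.inr ⟨z, w, hL', hlift htree, Relation.ReflTransGen.refl⟩
        · exact Or.inr ⟨z, w, hL', hxa.trans
            (Relation.ReflTransGen.head (Finset.mem_union_right _ hab) hbz),
            Relation.ReflTransGen.refl⟩
  -- final contradiction from an L-edge (a,b) with a union path b ⟶ a
  have noLcycle : ∀ a b : V, (a, b) ∈ Laux →
      Relation.ReflTransGen (fun p q => (p, q) ∈ U) b a → False := by
    intro a b hab hba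
    obtain ⟨hact, _, hlab⟩ := hLedge (a, b) hab
    obtain ⟨b', hQ', hle, hreach⟩ := key b a (fun c hc hr => hdesc (a, b) hab c hc hr) hba
    have := hQ' a hact hreach
    simp only at hlab hact
    omega
  intro v hv
  rcases (Relation.TransGen.tail'_iff).mp hv with ⟨w, hvw, hedge⟩
  rcases Finset.mem_union.mp hedge with hT' | hL'
  · rcases decomp v w hvw with htree | ⟨a, b, hab, hva, hbw⟩
    · exact tree_acyclic r Tbar hT v ((Relation.TransGen.tail'_iff).mpr ⟨w, htree, hT'⟩)
    · refine noLcycle a b hab ?_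
      exact (hbw.tail hedge).trans hva
  · exact noLcycle w v hL' hvw
end

section
/- Fix an iteration l of the primal-dual algorithm with active moats 𝒜_l and let C_A denote the SCC part of moat A. In the contracted graph G' (keeping only vertices in active moats, contracting each C_A, dropping Steiner nodes not hit by killer/expansion edges, and removing parallel edges), for each active moat A: |Δ^l_Killer(A) ∪ Δ^l_Exp(A)| ≤ |δ^{in}_{G'}(C_A)| + 1, provided (a) each Steiner node has in-degree at most 1 among killer/expansion edges of F̄, (b) each Steiner node in A \ C_A has an F_l-edge into C_A, and (c) at most one killer/expansion edge of F̄ enters C_A. -/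
variable {V : Type*} [Fintype V] [DecidableEq V]

/-!
Split the killer/expansion edges entering `A` by whether their head lies in `C_A`. Those
entering `C_A` are at most one by (c). Every other one has a Steiner head in `A \ C_A`, which
by (b) has an `F_l`-edge into `C_A`; since Steiner heads have `KE`-in-degree at most one by
(a), taking heads is injective on these edges.
-/

theorem Set.injOn_snd_of_card_filter_snd_le_one {α β : Type*} [DecidableEq β]
    {E : Finset (α × β)} {S : Set (α × β)} (hSE : S ⊆ E)
    (hdeg : ∀ e ∈ S, (E.filter (fun f => f.2 = e.2)).card ≤ 1) :
    S.InjOn Prod.snd := by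
  intro e he e' he' hsnd
  exact Finset.card_le_one.mp (hdeg e he) e (Finset.mem_filter.mpr ⟨hSE he, rfl⟩) e'
    (Finset.mem_filter.mpr ⟨hSE he', hsnd.symm⟩)

/-- `insert r X` is the set of terminals, so Steiner nodes are the vertices outside it, and
`δ^{in}_{G'}(C_A)` is represented by the retained Steiner nodes of `A \ C_A` with an
`Fl`-edge into `C_A`: after contracting `C_A` and removing parallel edges each of them
contributes exactly one edge. -/
theorem killer_expansion_into_moat_le_contracted_indegree
    (r : V) (X : Finset V) (A CA : Finset V) (Fl KE : Finset (V × V))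
    (hCAsub : CA ⊆ A)
    (ha : ∀ v : V, v ∉ insert r X → (KE.filter (fun e => e.2 = v)).card ≤ 1)
    (hheads : ∀ e ∈ KE, e.1 ∉ A → e.2 ∈ A → e.2 ∉ CA → e.2 ∉ insert r X)
    (hb : ∀ s ∈ A, s ∉ CA → s ∉ insert r X → ∃ f ∈ Fl, f.1 = s ∧ f.2 ∈ CA)
    (hc : (KE.filter (fun e => e.1 ∉ CA ∧ e.2 ∈ CA)).card ≤ 1) :
    (KE.filter (fun e => e.1 ∉ A ∧ e.2 ∈ A)).card ≤
      ((A \ CA).filter (fun s => s ∉ insert r X ∧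
        (∃ e ∈ KE, e.2 = s ∧ e.1 ∉ A) ∧
        (∃ f ∈ Fl, f.1 = s ∧ f.2 ∈ CA))).card + 1 := by
  set entering := KE.filter (fun e => e.1 ∉ A ∧ e.2 ∈ A)
  have hSteinerHeads : (entering.filter (fun e => e.2 ∉ CA)).card ≤
      ((A \ CA).filter (fun s => s ∉ insert r X ∧
        (∃ e ∈ KE, e.2 = s ∧ e.1 ∉ A) ∧ (∃ f ∈ Fl, f.1 = s ∧ f.2 ∈ CA))).card := by
    have hSteiner : ∀ e ∈ entering.filter (fun e => e.2 ∉ CA), e ∈ KE ∧ e.1 ∉ A ∧ e.2 ∈ A ∧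
        e.2 ∉ CA ∧ e.2 ∉ insert r X := by
      intro e he
      simp only [entering, Finset.mem_filter] at he
      exact ⟨he.1.1, he.1.2.1, he.1.2.2, he.2, hheads e he.1.1 he.1.2.1 he.1.2.2 he.2⟩
    refine Finset.card_le_card_of_injOn Prod.snd (fun e he => ?_) ?_
    · obtain ⟨heKE, hout, hin, hnCA, hst⟩ := hSteiner e he
      simp only [Finset.coe_filter, Finset.mem_sdiff, Set.mem_ofPred_eq]
      exact ⟨⟨hin, hnCA⟩, hst, ⟨e, heKE, rfl, hout⟩, hb e.2 hin hnCA hst⟩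
    · exact Set.injOn_snd_of_card_filter_snd_le_one (E := KE) (fun e he => (hSteiner e he).1)
        fun e he => ha e.2 (hSteiner e he).2.2.2.2
  have hIntoCA : (entering.filter (fun e => e.2 ∈ CA)).card ≤ 1 := by
    refine (Finset.card_le_card fun e he => ?_).trans hc
    simp only [entering, Finset.mem_filter] at he ⊢
    exact ⟨he.1.1, fun h => he.1.2.1 (hCAsub h), he.2⟩
  have hsplit := Finset.card_filter_add_card_filter_not (s := entering) (fun e => e.2 ∈ CA)
  omega
end
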